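/- (Reversed-order binomial expansion) Let y x = Q x y with Q, q invertible central. Then (x+y)^N_{>q} := (x+q^{N-1}y)···(x+qy)(x+y) = sum_{k=0}^N C(N,k)_{qQ^2, Q} (qQ^2)^{k(k-1)/2} x^{N-k} (Q^{-(N-1)} y)^k, where C(N,k)_{qQ^2,Q} is the two-base binomial coefficient with bases qQ^2 and Q. -/
import Mathlib


/-- The two-base binomial coefficients `C(n,k)_{a,b}`, defined by the Pascal
    recursion `C(n+1,k) = a^k C(n,k) + b^{n+1-k} C(n,k-1)` with
    `C(n,0) = C(n,n) = 1`. -/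
def qqBinom {R : Type*} [CommRing R] (a b : R) : ℕ → ℕ → R
  | 0, 0 => 1
  | 0, _ + 1 => 0
  | _ + 1, 0 => 1
  | n + 1, k + 1 => a ^ (k + 1) * qqBinom a b n (k + 1) + b ^ (n - k) * qqBinom a b n k

/-- Right-to-left ordered product `f (n-1) * ⋯ * f 1 * f 0`. -/
def descProd {A : Type*} [Ring A] (f : ℕ → A) : ℕ → A
  | 0 => 1
  | n + 1 => f n * descProd f n

section Aux
variable {R : Type*} [CommRing R]

lemma qqBinom_of_lt (a b : R) : ∀ n k, n < k → qqBinom a b n k = 0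
  | 0, _+1, _ => rfl
  | n+1, k+1, h => by
    rw [qqBinom, qqBinom_of_lt a b n (k+1) (by omega), qqBinom_of_lt a b n k (by omega)]
    ring

lemma qqBinom_zero_right (a b : R) : ∀ n, qqBinom a b n 0 = 1
  | 0 => rfl
  | _+1 => rfl

lemma qqBinom_absorb (a b : R) : ∀ n k,
    (a^(k+1) - b^(k+1)) * qqBinom a b n (k+1)
      = (a^(n-k) - b^(n-k)) * qqBinom a b n k
  | 0, 0 => by simp [qqBinom]
  | 0, k+1 => by
      simp [qqBinom_of_lt a b 0 (k+2) (by omega), qqBinom_of_lt a b 0 (k+1) (by omega)]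
  | n+1, 0 => by
      have ih := qqBinom_absorb a b n 0
      simp only [qqBinom]
      simp only [Nat.sub_zero, pow_one, qqBinom_zero_right] at *
      linear_combination a * ih
  | n+1, k+1 => by
      by_cases h : n ≤ k
      · rw [qqBinom, qqBinom_of_lt a b n (k+2) (by omega), qqBinom_of_lt a b n (k+1) (by omega),
          show n + 1 - (k+1) = 0 from by omega]
        ring
      · obtain ⟨j, rfl⟩ : ∃ j, n = k + 1 + j := ⟨n - k - 1, by omega⟩
        have ih1 := qqBinom_absorb a b (k+1+j) (k+1)
        have ih2 := qqBinom_absorb a b (k+1+j) k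
        rw [qqBinom, qqBinom,
          show k + 1 + j - (k+1) = j from by omega,
          show k + 1 + j - k = j + 1 from by omega,
          show k + 1 + j + 1 - (k+1) = j + 1 from by omega] at *
        linear_combination a^(k+2) * ih1 + b^(j+1) * ih2

lemma qqBinom_pascal' (a b : R) (n k : ℕ) :
    qqBinom a b (n+1) (k+1) = b^(k+1) * qqBinom a b n (k+1) + a^(n-k) * qqBinom a b n k := by
  have h := qqBinom_absorb a b n k
  rw [qqBinom]
  linear_combination h

lemma tri (k : ℕ) : (k+1)*k/2 = k*(k-1)/2 + k := by
  have h1 := Nat.choose_two_right (k+1)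
  have h2 := Nat.choose_two_right k
  have h3 : (k+1).choose 2 = k.choose 1 + k.choose 2 := Nat.choose_succ_succ k 1
  simp only [Nat.choose_one_right, Nat.add_sub_cancel] at h1 h3
  omega

/-- the full scalar coefficient -/
def coef (q Q : Rˣ) (N k : ℕ) : R :=
  qqBinom ((q*Q^2 : Rˣ) : R) ((Q : Rˣ) : R) N k *
    ((q*Q^2 : Rˣ) : R)^(k*(k-1)/2) * (((Q⁻¹ : Rˣ) : R))^(N*k) * ((Q : Rˣ) : R)^k

lemma coef_zero (q Q : Rˣ) (N : ℕ) : coef q Q N 0 = 1 := by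
  simp [coef, qqBinom_zero_right]

lemma coef_of_lt (q Q : Rˣ) {N k : ℕ} (h : N < k) : coef q Q N k = 0 := by
  simp [coef, qqBinom_of_lt _ _ _ _ h]

lemma coef_succ (q Q : Rˣ) {N k : ℕ} (h : k ≤ N) :
    coef q Q (N+1) (k+1) = coef q Q N (k+1) + (q:R)^N * (Q:R)^(N-k) * coef q Q N k := by
  obtain ⟨j, rfl⟩ : ∃ j, N = k + j := ⟨N - k, by omega⟩
  have hBW : ((Q : Rˣ) : R) * ((Q⁻¹ : Rˣ) : R) = 1 := by
    rw [← Units.val_mul, mul_inv_cancel, Units.val_one]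
  have h1 : ((Q : Rˣ) : R)^(k+1) * ((Q⁻¹ : Rˣ) : R)^(k+1) = 1 := by
    rw [← mul_pow, hBW, one_pow]
  have h2 : ((Q : Rˣ) : R)^(j+2*k+1) * ((Q⁻¹ : Rˣ) : R)^(j+2*k+1) = 1 := by
    rw [← mul_pow, hBW, one_pow]
  have hA : ((q*Q^2 : Rˣ) : R) = (q : R) * ((Q : Rˣ) : R)^2 := by
    push_cast; ring
  unfold coef
  rw [qqBinom_pascal', show k + j - k = j from by omega,
    Nat.add_sub_cancel, tri, hA]
  set C1 := qqBinom ((q : R) * ((Q : Rˣ) : R)^2) ((Q : Rˣ) : R) (k+j) (k+1) with hC1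
  set C0 := qqBinom ((q : R) * ((Q : Rˣ) : R)^2) ((Q : Rˣ) : R) (k+j) k with hC0
  linear_combination
    (C1 * (q:R)^(k*(k-1)/2+k) * ((Q : Rˣ) : R)^(2*(k*(k-1)/2)+3*k+1) *
      ((Q⁻¹ : Rˣ) : R)^((k+j)*(k+1))) * h1 +
    (C0 * (q:R)^(k+j+(k*(k-1)/2)) * ((Q : Rˣ) : R)^(j+2*(k*(k-1)/2)+k) *
      ((Q⁻¹ : Rˣ) : R)^((k+j)*k)) * h2

end Aux

section Main
variable {R : Type*} [CommRing R] {A : Type*} [Ring A] [Algebra R A]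

lemma y_pow_comm (Q : Rˣ) (x y : A) (hyx : y * x = (Q : R) • (x * y)) :
    ∀ m, y * x^m = ((Q:R)^m) • (x^m * y)
  | 0 => by simp
  | m+1 => by
    rw [pow_succ, ← mul_assoc, y_pow_comm Q x y hyx m, smul_mul_assoc, mul_assoc, hyx,
      mul_smul_comm, smul_smul, ← mul_assoc, ← pow_succ]

lemma expand (q Q : Rˣ) (x y : A) (hyx : y * x = (Q : R) • (x * y)) :
    ∀ N, descProd (fun k => x + ((q ^ k : Rˣ) : R) • y) N
      = ∑ k ∈ Finset.range (N+1), coef q Q N k • (x^(N-k) * y^k)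
  | 0 => by simp [descProd, coef_zero]
  | N+1 => by
    rw [descProd, expand q Q x y hyx N, add_mul, smul_mul_assoc, Finset.mul_sum, Finset.mul_sum]
    have L1 : ∀ k ∈ Finset.range (N+1),
        x * (coef q Q N k • (x^(N-k) * y^k)) = coef q Q N k • (x^(N+1-k) * y^k) := by
      intro k hk
      have hkN : k ≤ N := Finset.mem_range_succ_iff.mp hk
      rw [mul_smul_comm, ← mul_assoc, ← pow_succ', show N - k + 1 = N + 1 - k from by omega]
    have L2 : ∀ k ∈ Finset.range (N+1),
        y * (coef q Q N k • (x^(N-k) * y^k))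
          = ((Q:R)^(N-k) * coef q Q N k) • (x^(N-k) * y^(k+1)) := by
      intro k hk
      rw [mul_smul_comm, ← mul_assoc, y_pow_comm Q x y hyx, smul_mul_assoc, mul_assoc,
        ← pow_succ', smul_smul, mul_comm (coef q Q N k)]
    rw [Finset.sum_congr rfl L1, Finset.sum_congr rfl L2, Finset.smul_sum]
    have L3 : ∀ k ∈ Finset.range (N+1),
        ((q ^ N : Rˣ) : R) • (((Q:R)^(N-k) * coef q Q N k) • (x^(N-k) * y^(k+1)))
          = ((q:R)^N * (Q:R)^(N-k) * coef q Q N k) • (x^(N-k) * y^(k+1)) := by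
      intro k hk
      rw [smul_smul, Units.val_pow_eq_pow_val, mul_assoc]
    rw [Finset.sum_congr rfl L3]
    have e1 : ∀ k ∈ Finset.range (N+1),
        coef q Q (N+1) (k+1) • (x^(N+1-(k+1)) * y^(k+1))
          = coef q Q N (k+1) • (x^(N-k) * y^(k+1))
            + ((q:R)^N * (Q:R)^(N-k) * coef q Q N k) • (x^(N-k) * y^(k+1)) := by
      intro k hk
      have hkN : k ≤ N := Finset.mem_range_succ_iff.mp hk
      rw [coef_succ q Q hkN, add_smul, Nat.succ_sub_succ]
    have e2 : (∑ k ∈ Finset.range (N+1), coef q Q N (k+1) • (x^(N-k) * y^(k+1)))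
        + coef q Q (N+1) 0 • (x^(N+1-0) * y^0)
        = ∑ k ∈ Finset.range (N+1), coef q Q N k • (x^(N+1-k) * y^k) := by
      have h0 : coef q Q (N+1) 0 = coef q Q N 0 := by rw [coef_zero, coef_zero]
      rw [h0]
      have := (Finset.sum_range_succ' (fun k => coef q Q N k • (x^(N+1-k) * y^k)) (N+1)).symm
      simp only [Nat.succ_sub_succ] at this
      rw [this, Finset.sum_range_succ, coef_of_lt q Q (by omega), zero_smul, add_zero]
    have hR : (∑ k ∈ Finset.range (N+1+1), coef q Q (N+1) k • (x^(N+1-k) * y^k))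
        = (∑ k ∈ Finset.range (N+1), coef q Q N k • (x^(N+1-k) * y^k))
          + ∑ k ∈ Finset.range (N+1),
              ((q:R)^N * (Q:R)^(N-k) * coef q Q N k) • (x^(N-k) * y^(k+1)) := by
      rw [Finset.sum_range_succ', Finset.sum_congr rfl e1, Finset.sum_add_distrib, ← e2]
      abel
    rw [hR]

end Main

/-- reversed-order binomial expansion: if `y x = Q (x y)` then
    `(x+y)^N_{>q} = (x+q^{N-1}y)⋯(x+qy)(x+y)
       = ∑_{k=0}^N C(N,k)_{qQ²,Q} (qQ²)^{k(k-1)/2} x^{N-k} (Q^{-(N-1)} y)^k`. -/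
theorem reversed_order_binomial {R : Type*} [CommRing R] {A : Type*} [Ring A]
    [Algebra R A] (q Q : Rˣ) (x y : A)
    (hyx : y * x = (Q : R) • (x * y)) (N : ℕ) :
    descProd (fun k => x + ((q ^ k : Rˣ) : R) • y) N
      = ∑ k ∈ Finset.range (N + 1),
          (qqBinom ((q * Q ^ 2 : Rˣ) : R) ((Q : Rˣ) : R) N k *
              ((q * Q ^ 2 : Rˣ) : R) ^ (k * (k - 1) / 2)) •
            (x ^ (N - k) * ((((Q ^ ((N : ℤ) - 1))⁻¹ : Rˣ) : R) • y) ^ k) := by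
  rw [expand q Q x y hyx N]
  refine Finset.sum_congr rfl fun k hk => ?_
  have hkN : k ≤ N := Finset.mem_range_succ_iff.mp hk
  rw [smul_pow, mul_smul_comm, smul_smul]
  have hu : (((Q ^ ((N : ℤ) - 1))⁻¹ : Rˣ) : R) ^ k
      = (((Q⁻¹ : Rˣ) : R))^(N*k) * ((Q : Rˣ) : R)^k := by
    cases N with
    | zero =>
      interval_cases k
      simp
    | succ M =>
      have hz : ((M + 1 : ℕ) : ℤ) - 1 = (M : ℤ) := by push_cast; ring
      have huu : ((Q ^ (((M+1 : ℕ) : ℤ) - 1))⁻¹)^k = (Q⁻¹)^((M+1)*k) * Q^k := by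
        rw [hz, zpow_natCast, show (M+1)*k = M*k + k from by ring, pow_add, mul_assoc,
          inv_pow, inv_pow, ← pow_mul, inv_pow, inv_mul_cancel, mul_one]
      calc (((Q ^ (((M+1:ℕ) : ℤ) - 1))⁻¹ : Rˣ) : R) ^ k
          = ((((Q ^ (((M+1:ℕ) : ℤ) - 1))⁻¹)^k : Rˣ) : R) := by rw [Units.val_pow_eq_pow_val]
        _ = (((Q⁻¹)^((M+1)*k) * Q^k : Rˣ) : R) := by rw [huu]
        _ = (((Q⁻¹ : Rˣ) : R))^((M+1)*k) * ((Q : Rˣ) : R)^k := by push_cast; ring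
  rw [hu, coef]
  ring_nf
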